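/- For every β ≥ 0, the function F_β(x) = arctanh(tanh(β)·tanh(x)) is concave on the half-line x ≥ 0. -/

import Mathlib

/-!
With `t = tanh β`, the chain rule gives `F_β'(x) = t / (1 + (1 - t²) sinh² x)`. Since `0 ≤ t < 1`,
the denominator is positive and increasing on `x ≥ 0`, so `F_β'` is antitone there and `F_β` is
concave.
-/

noncomputable def artanh (x : ℝ) : ℝ := Real.log ((1 + x) / (1 - x)) / 2

noncomputable def F (β x : ℝ) : ℝ := artanh (Real.tanh β * Real.tanh x)

theorem hasDerivAt_artanh {y : ℝ} (hy : y ^ 2 < 1) : HasDerivAt artanh (1 - y ^ 2)⁻¹ y := by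
  have hp : 0 < 1 + y := by nlinarith
  have hm : 0 < 1 - y := by nlinarith
  have hpm : 1 - y ^ 2 ≠ 0 := (sub_pos.2 hy).ne'
  have h := (((hasDerivAt_id' y).const_add 1).div ((hasDerivAt_id' y).const_sub 1) hm.ne').log
    (div_pos hp hm).ne'
  refine (h.div_const 2).congr_deriv ?_
  simp only [Pi.div_apply]
  field_simp
  ring

open Real Set

theorem Real.tanh_nonneg {x : ℝ} (hx : 0 ≤ x) : 0 ≤ tanh x := by
  rw [tanh_eq_sinh_div_cosh]
  exact div_nonneg (sinh_nonneg_iff.2 hx) (cosh_pos x).le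

theorem Real.hasDerivAt_tanh (x : ℝ) : HasDerivAt tanh (cosh x ^ 2)⁻¹ x := by
  have hc := (cosh_pos x).ne'
  rw [show tanh = fun y => sinh y / cosh y from funext tanh_eq_sinh_div_cosh]
  refine ((hasDerivAt_sinh x).div (hasDerivAt_cosh x) hc).congr_deriv ?_
  field_simp
  linear_combination cosh_sq x

theorem hasDerivAt_F (β x : ℝ) :
    HasDerivAt (F β) (tanh β / (1 + (1 - tanh β ^ 2) * sinh x ^ 2)) x := by
  have hsq : (tanh β * tanh x) ^ 2 < 1 := by
    rw [mul_pow]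
    exact mul_lt_one_of_nonneg_of_lt_one_left (sq_nonneg _) (tanh_sq_lt_one β)
      (tanh_sq_lt_one x).le
  refine ((hasDerivAt_artanh hsq).comp x ((hasDerivAt_tanh x).const_mul (tanh β))).congr_deriv ?_
  have hc := (cosh_pos x).ne'
  have hd : cosh x ^ 2 - (tanh β * sinh x) ^ 2 = 1 + (1 - tanh β ^ 2) * sinh x ^ 2 := by
    linear_combination cosh_sq x
  rw [tanh_eq_sinh_div_cosh x, ← hd]
  field_simp

theorem antitoneOn_div_one_add_mul_sinh_sq {t c : ℝ} (ht : 0 ≤ t) (hc : 0 ≤ c) :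
    AntitoneOn (fun x => t / (1 + c * sinh x ^ 2)) (Ici 0) := by
  intro x hx y _ hxy
  have hsx : 0 ≤ sinh x := sinh_nonneg_iff.2 hx
  have hsxy : sinh x ≤ sinh y := sinh_le_sinh.2 hxy
  exact div_le_div_of_nonneg_left ht (by positivity) (by gcongr)

theorem stmt_3 (β : ℝ) (hβ : 0 ≤ β) : ConcaveOn ℝ (Set.Ici (0 : ℝ)) (F β) := by
  have hF' : deriv (F β) = fun x => tanh β / (1 + (1 - tanh β ^ 2) * sinh x ^ 2) :=
    funext fun x => (hasDerivAt_F β x).deriv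
  refine AntitoneOn.concaveOn_of_deriv (convex_Ici 0)
    (fun x _ => (hasDerivAt_F β x).continuousAt.continuousWithinAt)
    (fun x _ => (hasDerivAt_F β x).differentiableAt.differentiableWithinAt) ?_
  rw [hF', interior_Ici]
  exact (antitoneOn_div_one_add_mul_sinh_sq (tanh_nonneg hβ)
    (by linarith [tanh_sq_lt_one β])).mono Ioi_subset_Ici_self
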